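/- Let k be a perfect field of characteristic p > 0 and let A ⊆ B be a homogeneous integral extension of positively ℕ-graded Noetherian k-domains of Krull dimension two, where A is integrally closed in its fraction field and contains a nonzero homogeneous element of degree 1. Suppose the induced extension of fraction fields Quot(A) ⊆ Quot(B) is purely inseparable of degree p^e. Then for every b ∈ B, the element b^{p^e} lies in A, and moreover lies in the p^e-th Veronese subring A^{(p^e)}; that is, B^{p^e} ⊆ A^{(p^e)}. -/

import Mathlib

/-!
Over the fraction field `K` of `A`, the extension `Frac B / K` is finite purely inseparable, so
the degree of every minimal polynomial, a power of `p`, divides `[Frac B : K] = p ^ e`; hence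
`b ^ p ^ e ∈ K` for every `b`. Being integral over the normal domain `A`, it lies in `A`.
Finally `b ↦ b ^ p ^ e` is additive and multiplies degrees by `p ^ e`, so `b ^ p ^ e` has no
components outside degrees divisible by `p ^ e`, and this is detected in `B` since the inclusion
`A → B` is graded and injective.
-/

open DirectSum

theorem IsPurelyInseparable.pow_finrank_mem_range {K L : Type*} [Field K] [Field L]
    [Algebra K L] [IsPurelyInseparable K L] [FiniteDimensional K L] (y : L) :
    y ^ Module.finrank K L ∈ (algebraMap K L).range := by
  obtain ⟨c, hc⟩ := minpoly.degree_dvd (Algebra.IsIntegral.isIntegral (R := K) y)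
  rw [minpoly_natDegree_eq] at hc
  rw [hc, pow_mul]
  exact Subring.pow_mem _ (elemExponent_def K y) c

theorem DirectSum.decompose_pow_expChar_pow_of_not_dvd {B σ : Type*} [CommSemiring B]
    [SetLike σ B] [AddSubmonoidClass σ B] (ℬ : ℕ → σ) [GradedRing ℬ] (p : ℕ) [ExpChar B p]
    (b : B) (n : ℕ) {i : ℕ} (hi : ¬ p ^ n ∣ i) : (decompose ℬ (b ^ p ^ n) i : B) = 0 := by
  induction b using DirectSum.Decomposition.inductionOn ℬ with
  | zero => simp [zero_pow (pow_ne_zero n (expChar_pos B p).ne')]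
  | @homogeneous j y =>
    have hmem : (y : B) ^ p ^ n ∈ ℬ (p ^ n * j) := by
      simpa only [smul_eq_mul] using SetLike.pow_mem_graded (p ^ n) y.2
    exact decompose_of_mem_ne ℬ hmem fun h ↦ hi ⟨j, h.symm⟩
  | add y z hy hz =>
    rw [add_pow_expChar_pow, decompose_add, add_apply, AddMemClass.coe_add, hy, hz, add_zero]

theorem exists_algebraMap_eq_of_isIntegral_of_mem_range {A B K L : Type*} [CommRing A]
    [CommRing B] [Algebra A B] [Field K] [Algebra A K] [IsFractionRing A K]
    [IsIntegrallyClosed A] [CommRing L] [Nontrivial L] [Algebra B L]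
    (hL : Function.Injective (algebraMap B L)) (φ : K →+* L)
    (hφ : φ.comp (algebraMap A K) = (algebraMap B L).comp (algebraMap A B))
    {b : B} (hb : IsIntegral A b) (hmem : algebraMap B L b ∈ φ.range) :
    ∃ a : A, algebraMap A B a = b := by
  obtain ⟨q, hq⟩ := hmem
  have hq_int : IsIntegral A q := by
    refine RingHom.IsIntegralElem.of_map φ.injective ?_
    rw [hφ, hq]
    exact RingHom.IsIntegralElem.map hb (algebraMap B L)
  obtain ⟨a, rfl⟩ := IsIntegrallyClosed.isIntegral_iff.mp hq_int
  refine ⟨a, hL ?_⟩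
  rw [← hq, ← RingHom.comp_apply, ← hφ, RingHom.comp_apply]

theorem frobenius_pow_mem_veronese_of_purely_inseparable_general
    (k : Type*) [Field k] (p : ℕ) [Fact p.Prime] [CharP k p]
    (A B : Type*) [CommRing A] [CommRing B] [IsDomain A] [IsDomain B]
    [Algebra k A] [Algebra k B] [Algebra A B]
    (𝒜 : ℕ → Submodule k A) [GradedAlgebra 𝒜]
    (ℬ : ℕ → Submodule k B) [GradedAlgebra ℬ]
    (hinj : Function.Injective (algebraMap A B))
    (hhom : ∀ i : ℕ, ∀ a ∈ 𝒜 i, algebraMap A B a ∈ ℬ i)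
    [Algebra.IsIntegral A B]
    [IsIntegrallyClosed A]
    (φ : FractionRing A →+* FractionRing B)
    (hφ : ∀ a : A, φ (algebraMap A (FractionRing A) a) =
      algebraMap B (FractionRing B) (algebraMap A B a))
    (hpins : ∀ y : FractionRing B, ∃ m : ℕ, y ^ p ^ m ∈ φ.fieldRange)
    (e : ℕ) (hdeg : Module.finrank φ.fieldRange (FractionRing B) = p ^ e) :
    ∀ b : B, ∃ a : A,
      (∀ i : ℕ, ¬ p ^ e ∣ i → (DirectSum.decompose 𝒜 a i : A) = 0) ∧
      algebraMap A B a = b ^ p ^ e := by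
  intro b
  have hp : p.Prime := Fact.out
  have : CharP B p := charP_of_injective_algebraMap (algebraMap k B).injective p
  have : CharP (FractionRing B) p :=
    charP_of_injective_algebraMap (IsFractionRing.injective B _) p
  have : ExpChar φ.fieldRange p := ExpChar.prime hp
  have : IsPurelyInseparable φ.fieldRange (FractionRing B) :=
    (isPurelyInseparable_iff_pow_mem _ p).2 fun y ↦ (hpins y).imp fun _ h ↦ ⟨⟨_, h⟩, rfl⟩
  have : FiniteDimensional φ.fieldRange (FractionRing B) :=
    .of_finrank_pos (hdeg ▸ pow_pos hp.pos e)
  have hpow : algebraMap B (FractionRing B) (b ^ p ^ e) ∈ φ.range := by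
    obtain ⟨c, hc⟩ := IsPurelyInseparable.pow_finrank_mem_range
      (K := φ.fieldRange) (algebraMap B (FractionRing B) b)
    rw [map_pow, ← hdeg, ← hc]
    exact c.2
  obtain ⟨a, ha⟩ := exists_algebraMap_eq_of_isIntegral_of_mem_range
    (IsFractionRing.injective B _) φ (RingHom.ext hφ) (Algebra.IsIntegral.isIntegral _) hpow
  let ι : 𝒜 →+*ᵍ ℬ := ⟨algebraMap A B, hhom _ _⟩
  refine ⟨a, fun i hi ↦ hinj ?_, ha⟩
  rw [map_zero]
  change ι _ = 0
  rw [GradedRingHom.map_directSumDecompose, show ι a = b ^ p ^ e from ha]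
  exact decompose_pow_expChar_pow_of_not_dvd ℬ p b e hi

/-- Let `k` be a perfect field of characteristic `p > 0` and `A ⊆ B` a
homogeneous integral extension of positively ℕ-graded Noetherian `k`-domains of
Krull dimension two, with `A` normal and containing a nonzero element of degree
one.  If the extension of fraction fields is purely inseparable of degree
`p ^ e`, then every `b ^ p ^ e` (for `b ∈ B`) lies in the `p^e`-th Veronese
subring of `A`. -/
theorem frobenius_pow_mem_veronese_of_purely_inseparable
    (k : Type*) [Field k] (p : ℕ) [Fact p.Prime] [CharP k p] [PerfectField k]
    (A B : Type*) [CommRing A] [CommRing B] [IsDomain A] [IsDomain B]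
    [IsNoetherianRing A] [IsNoetherianRing B]
    [Algebra k A] [Algebra k B] [Algebra A B] [IsScalarTower k A B]
    (𝒜 : ℕ → Submodule k A) [GradedAlgebra 𝒜]
    (ℬ : ℕ → Submodule k B) [GradedAlgebra ℬ]
    (hinj : Function.Injective (algebraMap A B))
    (hhom : ∀ i : ℕ, ∀ a ∈ 𝒜 i, algebraMap A B a ∈ ℬ i)
    [Algebra.IsIntegral A B]
    (hdimA : ringKrullDim A = 2) (hdimB : ringKrullDim B = 2)
    [IsIntegrallyClosed A]
    (x : A) (hx1 : x ∈ 𝒜 1) (hx0 : x ≠ 0)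
    (φ : FractionRing A →+* FractionRing B)
    (hφ : ∀ a : A, φ (algebraMap A (FractionRing A) a) =
      algebraMap B (FractionRing B) (algebraMap A B a))
    (hpins : ∀ y : FractionRing B, ∃ m : ℕ, y ^ p ^ m ∈ φ.fieldRange)
    (e : ℕ) (hdeg : Module.finrank φ.fieldRange (FractionRing B) = p ^ e) :
    ∀ b : B, ∃ a : A,
      (∀ i : ℕ, ¬ p ^ e ∣ i → (DirectSum.decompose 𝒜 a i : A) = 0) ∧
      algebraMap A B a = b ^ p ^ e :=
  frobenius_pow_mem_veronese_of_purely_inseparable_general k p A B 𝒜 ℬ hinj hhom φ hφ hpins e hdeg
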